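/- In the exterior algebra Λ(α₁,...,α₆) on six degree-1 generators, H⁶ of the Chevalley–Eilenberg complex above is 1-dimensional, spanned by [α₁α₂α₃α₄α₅α₆] (every 6-form is closed, and no nonzero multiple of the top form is exact). -/

import Mathlib

/-- The generators `α₁,…,α₆` (0-indexed) of the exterior algebra `Λ(α₁,…,α₆)`. -/
noncomputable def genCE (i : Fin 6) : ExteriorAlgebra ℝ (Fin 6 → ℝ) :=
  ExteriorAlgebra.ι ℝ (Pi.single i 1)

/-!
The top form has coordinate `1` in the monomial basis of `Λ`, so it is nonzero.

The 5-forms are spanned by the six monomials omitting one generator, and `d` kills each of them: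
expanding by the Leibniz rule, the term in which `αⱼ` is replaced by `dαⱼ` could only survive if
`dαⱼ` contained `αⱼ`, which never happens (unimodularity). The top form is closed for the same
reason.

Since `d` raises degrees by one, the top-degree component of an exact form `dβ` is `d` of the
degree-5 component of `β`, which vanishes; so the top coordinate of every exact form is `0`.
-/

open ExteriorAlgebra

theorem Fin.exists_succAbove_eq_of_strictMono {n : ℕ} {w : Fin n → Fin (n + 1)}
    (hw : StrictMono w) : ∃ i : Fin (n + 1), w = i.succAbove := by
  obtain ⟨i, -, hi⟩ : ∃ i ∈ Finset.univ, i ∉ Finset.univ.image w :=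
    Finset.exists_mem_notMem_of_card_lt_card (by
      simp [Finset.card_image_of_injective _ hw.injective])
  refine ⟨i, ?_⟩
  have hw' := Finset.orderEmbOfFin_unique (s := {i}ᶜ) (by simp [Finset.card_compl])
    (fun x => Finset.mem_compl.2 fun hx => hi (by simp_all)) hw
  rw [hw', Finset.orderEmbOfFin_compl_singleton_eq_succAboveOrderEmb]
  rfl

namespace ExteriorAlgebra

variable {R M : Type*} [CommRing R] [AddCommGroup M] [Module R M]

theorem exteriorPower_le_ker_of_strictMono {N : Type*} [AddCommGroup N] [Module R N]
    {I : Type*} [LinearOrder I] (b : Module.Basis I R M) {n : ℕ}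
    (f : ExteriorAlgebra R M →ₗ[R] N)
    (hf : ∀ w : Fin n → I, StrictMono w → f (ιMulti R n (b ∘ w)) = 0) :
    ⋀[R]^n M ≤ LinearMap.ker f := by
  rw [← exteriorPower.ιMulti_family_span_fixedDegree_of_span R b.span_eq, Submodule.span_le]
  rintro - ⟨s, rfl⟩
  exact hf _ (Set.powersetCard.ofFinEmbEquiv.symm s).strictMono

theorem exteriorPower_le_ker_of_succAbove {N : Type*} [AddCommGroup N] [Module R N] {n : ℕ}
    (b : Module.Basis (Fin (n + 1)) R M) (f : ExteriorAlgebra R M →ₗ[R] N)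
    (hf : ∀ i : Fin (n + 1), f (ιMulti R n (b ∘ i.succAbove)) = 0) :
    ⋀[R]^n M ≤ LinearMap.ker f :=
  exteriorPower_le_ker_of_strictMono b f fun _ hw => by
    obtain ⟨i, rfl⟩ := Fin.exists_succAbove_eq_of_strictMono hw
    exact hf i

theorem map_mem_exteriorPower_succ (d : ExteriorAlgebra R M →ₗ[R] ExteriorAlgebra R M)
    (hone : d 1 = 0) (hleib : ∀ v y, d (ι R v * y) = d (ι R v) * y - ι R v * d y)
    (hι : ∀ v, d (ι R v) ∈ ⋀[R]^2 M) {k : ℕ} {x : ExteriorAlgebra R M}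
    (hx : x ∈ ⋀[R]^k M) : d x ∈ ⋀[R]^(k + 1) M := by
  induction hx using Submodule.pow_induction_on_left' with
  | algebraMap r =>
    rw [Algebra.algebraMap_eq_smul_one, map_smul, hone, smul_zero]
    exact zero_mem _
  | add x y i _ _ ihx ihy => rw [map_add]; exact add_mem ihx ihy
  | mem_mul m hm i x hx ih =>
    obtain ⟨v, rfl⟩ := hm
    rw [hleib]
    refine sub_mem ?_ ?_
    · simpa [add_comm, add_left_comm] using SetLike.GradedMul.mul_mem (hι v) hx
    · simpa [add_comm] using SetLike.GradedMul.mul_mem (i := 1) (by simp) ih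

theorem coord_univ_eq_zero_of_mem_exteriorPower {I : Type*} [LinearOrder I] [Fintype I]
    (b : Module.Basis I R M) {j : ℕ} (hj : j ≠ Fintype.card I) {x : ExteriorAlgebra R M}
    (hx : x ∈ ⋀[R]^j M) : b.ExteriorAlgebra.coord Finset.univ x = 0 := by
  rw [← exteriorPower.ιMulti_family_span_fixedDegree_of_span R b.span_eq] at hx
  refine (Submodule.span_le (p := LinearMap.ker _)).2 ?_ hx
  rintro - ⟨s, rfl⟩
  have hs : s.val ≠ Finset.univ := fun h => hj (by rw [← s.prop, h, Finset.card_univ])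
  rw [SetLike.mem_coe, LinearMap.mem_ker, ← basis_apply_powersetCard, Module.Basis.coord_apply,
    Module.Basis.repr_self, Finsupp.single_eq_of_ne hs.symm]

theorem coord_univ_ιMulti {n : ℕ} (b : Module.Basis (Fin n) R M) :
    b.ExteriorAlgebra.coord Finset.univ (ιMulti R n b) = 1 := by
  have h : (Finset.univ : Finset (Fin n)).card = n := Finset.card_fin n
  have hid : (id : Fin n → Fin n) = Finset.univ.orderEmbOfFin h :=
    Finset.orderEmbOfFin_unique h (fun _ => Finset.mem_univ _) strictMono_id
  have htop : ιMulti R n b = b.ExteriorAlgebra Finset.univ := by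
    rw [basis_apply_ofCard b h, ιMulti_family, Set.powersetCard.ofFinEmbEquiv_symm_apply]
    exact congrArg (fun w => ιMulti R n (b ∘ w)) hid
  rw [htop, Module.Basis.coord_apply, Module.Basis.repr_self, Finsupp.single_eq_same]

theorem coord_univ_map_eq_zero {n : ℕ} (b : Module.Basis (Fin (n + 1)) R M)
    (d : ExteriorAlgebra R M →ₗ[R] ExteriorAlgebra R M) (hone : d 1 = 0)
    (hleib : ∀ v y, d (ι R v * y) = d (ι R v) * y - ι R v * d y)
    (hι : ∀ v, d (ι R v) ∈ ⋀[R]^2 M) (hker : ⋀[R]^n M ≤ LinearMap.ker d)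
    (x : ExteriorAlgebra R M) : b.ExteriorAlgebra.coord Finset.univ (d x) = 0 := by
  induction x using DirectSum.Decomposition.inductionOn (fun i : ℕ => ⋀[R]^i M) with
  | zero => rw [map_zero, map_zero]
  | add x y hx hy => rw [map_add, map_add, hx, hy, add_zero]
  | @homogeneous i x =>
    obtain ⟨x, hx⟩ := x
    by_cases hi : i = n
    · subst hi
      rw [show d x = 0 from hker hx, map_zero]
    · exact coord_univ_eq_zero_of_mem_exteriorPower b (by simpa using hi)
        (map_mem_exteriorPower_succ d hone hleib hι hx)

end ExteriorAlgebra

theorem genCE_mul_self (i : Fin 6) : genCE i * genCE i = 0 := ι_sq_zero _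

theorem genCE_mul_genCE_mul_self (i : Fin 6) (x : ExteriorAlgebra ℝ (Fin 6 → ℝ)) :
    genCE i * (genCE i * x) = 0 := by
  rw [← mul_assoc, genCE_mul_self, zero_mul]

/-- The guard `i < j` orients the rewrite, so that `simp` sorts monomials into increasing order. -/
theorem genCE_mul_genCE_of_lt {i j : Fin 6} (_ : i < j) :
    genCE j * genCE i = -(genCE i * genCE j) :=
  eq_neg_of_add_eq_zero_right (ι_add_mul_swap _ _)

theorem genCE_mul_genCE_mul_of_lt {i j : Fin 6} (h : i < j) (x : ExteriorAlgebra ℝ (Fin 6 → ℝ)) :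
    genCE j * (genCE i * x) = -(genCE i * (genCE j * x)) := by
  rw [← mul_assoc, ← mul_assoc, genCE_mul_genCE_of_lt h, neg_mul]

theorem genCE_mem_exteriorPower_one (i : Fin 6) : genCE i ∈ ⋀[ℝ]^1 (Fin 6 → ℝ) := by
  simp [genCE]

theorem ιMulti_basisFun_five (w : Fin 5 → Fin 6) :
    ιMulti ℝ 5 (Pi.basisFun ℝ (Fin 6) ∘ w) =
      genCE (w 0) * genCE (w 1) * genCE (w 2) * genCE (w 3) * genCE (w 4) := by
  simp only [ιMulti_apply, List.ofFn_succ, List.ofFn_zero, List.prod_cons, List.prod_nil, mul_one,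
    mul_assoc, Function.comp_apply, Pi.basisFun_apply, Fin.reduceSucc, Fin.isValue]
  rfl

theorem ιMulti_basisFun_six :
    ιMulti ℝ 6 (Pi.basisFun ℝ (Fin 6)) =
      genCE 0 * genCE 1 * genCE 2 * genCE 3 * genCE 4 * genCE 5 := by
  simp only [ιMulti_apply, List.ofFn_succ, List.ofFn_zero, List.prod_cons, List.prod_nil, mul_one,
    mul_assoc, Pi.basisFun_apply, Fin.reduceSucc, Fin.isValue]
  rfl

structure IsCEDifferential
    (d : ExteriorAlgebra ℝ (Fin 6 → ℝ) →ₗ[ℝ] ExteriorAlgebra ℝ (Fin 6 → ℝ)) : Prop where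
  leibniz : ∀ (v : Fin 6 → ℝ) (y : ExteriorAlgebra ℝ (Fin 6 → ℝ)),
    d (ι ℝ v * y) = d (ι ℝ v) * y - ι ℝ v * d y
  d_gen0 : d (genCE 0) = 0
  d_gen1 : d (genCE 1) = 0
  d_gen2 : d (genCE 2) = 0
  d_gen3 : d (genCE 3) = genCE 0 * genCE 1
  d_gen4 : d (genCE 4) = genCE 0 * genCE 3
  d_gen5 : d (genCE 5) = genCE 0 * genCE 4 + genCE 1 * genCE 2 + genCE 1 * genCE 3

namespace IsCEDifferential

variable {d : ExteriorAlgebra ℝ (Fin 6 → ℝ) →ₗ[ℝ] ExteriorAlgebra ℝ (Fin 6 → ℝ)}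
  (hd : IsCEDifferential d)
include hd

theorem map_genCE_mul (i : Fin 6) (y : ExteriorAlgebra ℝ (Fin 6 → ℝ)) :
    d (genCE i * y) = d (genCE i) * y - genCE i * d y :=
  hd.leibniz _ y

theorem map_ι_mem (v : Fin 6 → ℝ) : d (ι ℝ v) ∈ ⋀[ℝ]^2 (Fin 6 → ℝ) := by
  have hmul (j k : Fin 6) : genCE j * genCE k ∈ ⋀[ℝ]^2 (Fin 6 → ℝ) :=
    SetLike.GradedMul.mul_mem (genCE_mem_exteriorPower_one j) (genCE_mem_exteriorPower_one k)
  have hgen (i : Fin 6) : d (genCE i) ∈ ⋀[ℝ]^2 (Fin 6 → ℝ) := by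
    fin_cases i <;> simp only [Fin.reduceFinMk, Fin.isValue]
    · exact hd.d_gen0 ▸ zero_mem _
    · exact hd.d_gen1 ▸ zero_mem _
    · exact hd.d_gen2 ▸ zero_mem _
    · exact hd.d_gen3 ▸ hmul 0 1
    · exact hd.d_gen4 ▸ hmul 0 3
    · exact hd.d_gen5 ▸ add_mem (add_mem (hmul 0 4) (hmul 1 2)) (hmul 1 3)
  have hspan : Submodule.span ℝ (Set.range (Pi.basisFun ℝ (Fin 6))) ≤
      (⋀[ℝ]^2 (Fin 6 → ℝ)).comap (d ∘ₗ ι ℝ) :=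
    Submodule.span_le.2 (Set.range_subset_iff.2 fun i => by simpa [genCE] using hgen i)
  rw [(Pi.basisFun ℝ (Fin 6)).span_eq] at hspan
  exact hspan Submodule.mem_top

theorem map_prod_genCE_succAbove (i : Fin 6) :
    d (genCE (i.succAbove 0) * genCE (i.succAbove 1) * genCE (i.succAbove 2) *
      genCE (i.succAbove 3) * genCE (i.succAbove 4)) = 0 := by
  fin_cases i <;>
  simp only [Fin.reduceFinMk, Fin.isValue, Fin.succAbove, Fin.reduceCastSucc, Fin.reduceSucc,
    Fin.reduceLT, ↓reduceIte] <;>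
  simp only [mul_assoc, hd.map_genCE_mul, hd.d_gen0, hd.d_gen1, hd.d_gen2, hd.d_gen3,
    hd.d_gen4, hd.d_gen5] <;>
  simp (disch := decide) only [mul_add, mul_sub, mul_neg, mul_zero, zero_mul, genCE_mul_self,
    genCE_mul_genCE_mul_self, genCE_mul_genCE_of_lt, genCE_mul_genCE_mul_of_lt] <;>
  abel

theorem exteriorPower_five_le_ker : ⋀[ℝ]^5 (Fin 6 → ℝ) ≤ LinearMap.ker d :=
  exteriorPower_le_ker_of_succAbove (Pi.basisFun ℝ (Fin 6)) d fun i => by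
    rw [ιMulti_basisFun_five]
    exact hd.map_prod_genCE_succAbove i

theorem map_top : d (genCE 0 * genCE 1 * genCE 2 * genCE 3 * genCE 4 * genCE 5) = 0 := by
  have h : d (genCE 1 * genCE 2 * genCE 3 * genCE 4 * genCE 5) = 0 :=
    hd.map_prod_genCE_succAbove 0
  simp only [mul_assoc] at h ⊢
  rw [hd.map_genCE_mul, hd.d_gen0, h, zero_mul, mul_zero, sub_zero]

end IsCEDifferential

/-- `H⁶` of the Chevalley–Eilenberg complex is 1-dimensional, spanned by the
class of the top form `α₁α₂α₃α₄α₅α₆`: the top form is nonzero and closed,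
`d` of each basis 5-form vanishes, and no nonzero multiple of the top form
is exact. -/
theorem H6_one_dimensional
    (d : ExteriorAlgebra ℝ (Fin 6 → ℝ) →ₗ[ℝ] ExteriorAlgebra ℝ (Fin 6 → ℝ))
    (hone : d 1 = 0)
    (hleib : ∀ (v : Fin 6 → ℝ) (y : ExteriorAlgebra ℝ (Fin 6 → ℝ)),
      d (ExteriorAlgebra.ι ℝ v * y)
        = d (ExteriorAlgebra.ι ℝ v) * y - ExteriorAlgebra.ι ℝ v * d y)
    (h1 : d (genCE 0) = 0) (h2 : d (genCE 1) = 0) (h3 : d (genCE 2) = 0)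
    (h4 : d (genCE 3) = genCE 0 * genCE 1)
    (h5 : d (genCE 4) = genCE 0 * genCE 3)
    (h6 : d (genCE 5) = genCE 0 * genCE 4 + genCE 1 * genCE 2 + genCE 1 * genCE 3) :
    genCE 0 * genCE 1 * genCE 2 * genCE 3 * genCE 4 * genCE 5 ≠ 0 ∧
    d (genCE 0 * genCE 1 * genCE 2 * genCE 3 * genCE 4 * genCE 5) = 0 ∧
    d (genCE 1 * genCE 2 * genCE 3 * genCE 4 * genCE 5) = 0 ∧
    d (genCE 0 * genCE 2 * genCE 3 * genCE 4 * genCE 5) = 0 ∧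
    d (genCE 0 * genCE 1 * genCE 3 * genCE 4 * genCE 5) = 0 ∧
    d (genCE 0 * genCE 1 * genCE 2 * genCE 4 * genCE 5) = 0 ∧
    d (genCE 0 * genCE 1 * genCE 2 * genCE 3 * genCE 5) = 0 ∧
    d (genCE 0 * genCE 1 * genCE 2 * genCE 3 * genCE 4) = 0 ∧
    (∀ c : ℝ, c ≠ 0 →
      ¬ ∃ β, d β = c • (genCE 0 * genCE 1 * genCE 2 * genCE 3 * genCE 4 * genCE 5)) := by
  have hd : IsCEDifferential d := ⟨hleib, h1, h2, h3, h4, h5, h6⟩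
  have htop := coord_univ_ιMulti (Pi.basisFun ℝ (Fin 6))
  rw [ιMulti_basisFun_six] at htop
  refine ⟨fun h => by simp [h] at htop, hd.map_top, hd.map_prod_genCE_succAbove 0,
    hd.map_prod_genCE_succAbove 1, hd.map_prod_genCE_succAbove 2, hd.map_prod_genCE_succAbove 3,
    hd.map_prod_genCE_succAbove 4, hd.map_prod_genCE_succAbove 5, ?_⟩
  rintro c hc ⟨β, hβ⟩
  have hexact := coord_univ_map_eq_zero (Pi.basisFun ℝ (Fin 6)) d hone hleib hd.map_ι_mem
    hd.exteriorPower_five_le_ker β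
  rw [hβ, map_smul, htop, smul_eq_mul, mul_one] at hexact
  exact hc hexact
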